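/- arXiv:1805.01215 — 3 statements merged into one kernel-verified Lean document; each statement's English description precedes it below -/
import Mathlib

section
/- Let e ≥ 0 and k ≥ 5 be integers, and let t : ℕ → ℕ be a finitely supported function with t(r) = 0 whenever r < 2 or r > k − 3. If ∑_r r(r−1)·t(r) = (e+2)(k² − k) and ∑_r t(r) ≥ k, then ∑_r t(r) ≥ e + 6. -/
/-- Lemma 2 (combinatorial content): for a rational section arrangement of `k ≥ 5`
curves in the Hirzebruch surface `F_e`, if `t r` counts `r`-fold points (vanishing
for `r < 2` and `r > k - 3`), `∑ r(r-1) t r = (e+2)(k² - k)` and `∑ t r ≥ k`,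
then `∑ t r ≥ e + 6`. -/
theorem stmt_0 (e k : ℤ) (he : 0 ≤ e) (hk : 5 ≤ k) (t : ℕ →₀ ℕ)
    (hsupp : ∀ r : ℕ, ((r : ℤ) < 2 ∨ k - 3 < (r : ℤ)) → t r = 0)
    (hsum : ∑ r ∈ t.support, (r : ℤ) * ((r : ℤ) - 1) * (t r : ℤ) = (e + 2) * (k ^ 2 - k))
    (hf0 : k ≤ ∑ r ∈ t.support, (t r : ℤ)) :
    e + 6 ≤ ∑ r ∈ t.support, (t r : ℤ) := by
  by_cases hke : e + 6 ≤ k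
  · linarith
  push_neg at hke
  have key : (e + 2) * (k ^ 2 - k) ≤ (k - 3) * (k - 4) * ∑ r ∈ t.support, (t r : ℤ) := by
    rw [← hsum, Finset.mul_sum]
    apply Finset.sum_le_sum
    intro r hr
    have htr : t r ≠ 0 := Finsupp.mem_support_iff.mp hr
    have h2 : (2 : ℤ) ≤ (r : ℤ) := by
      by_contra h; exact htr (hsupp r (Or.inl (by linarith)))
    have h3 : (r : ℤ) ≤ k - 3 := by
      by_contra h; exact htr (hsupp r (Or.inr (by linarith)))
    have htpos : (0 : ℤ) ≤ (t r : ℤ) := Int.ofNat_nonneg _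
    have hrr : (r : ℤ) * ((r : ℤ) - 1) ≤ (k - 3) * (k - 4) := by nlinarith
    exact mul_le_mul_of_nonneg_right hrr htpos
  by_contra hF
  push_neg at hF
  have hF' : ∑ r ∈ t.support, (t r : ℤ) ≤ e + 5 := by linarith
  have hnn : (0 : ℤ) ≤ (k - 3) * (k - 4) := by nlinarith
  have : (k - 3) * (k - 4) * ∑ r ∈ t.support, (t r : ℤ) ≤ (k - 3) * (k - 4) * (e + 5) := by
    exact mul_le_mul_of_nonneg_left hF' hnn
  nlinarith [key, this, hke, hk, he]
end

section
/- There do not exist integers e ≥ 2 and k ≥ 5 and rational numbers t₂, t₆ such that t₂ = ((e+2)k² − 21(e+2)k + (10e+40)k)/12, t₆ = ((e+2)k² + (3e+6)k − (2e+8)k)/36, and 16 + (3e+2)k + t₂ = 3t₆. Indeed, these three equations force (e+1)k = −8, which is impossible. -/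
/-- The `n = 2` case for rational section arrangements in `F_e` (`e ≥ 2`): the
proportionality constraints and the ball-quotient condition force `(e+1)k = -8`,
a contradiction. -/
theorem stmt_5 :
    ¬ ∃ (e k : ℤ) (t₂ t₆ : ℚ), 2 ≤ e ∧ 5 ≤ k ∧
      t₂ = (((e : ℚ) + 2) * (k : ℚ) ^ 2 - 21 * ((e : ℚ) + 2) * (k : ℚ)
              + (10 * (e : ℚ) + 40) * (k : ℚ)) / 12 ∧
      t₆ = (((e : ℚ) + 2) * (k : ℚ) ^ 2 + (3 * (e : ℚ) + 6) * (k : ℚ)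
              - (2 * (e : ℚ) + 8) * (k : ℚ)) / 36 ∧
      16 + (3 * (e : ℚ) + 2) * (k : ℚ) + t₂ = 3 * t₆ := by
  rintro ⟨e, k, t₂, t₆, he, hk, h2, h6, h⟩
  have he' : (2 : ℚ) ≤ (e : ℚ) := by exact_mod_cast he
  have hk' : (5 : ℚ) ≤ (k : ℚ) := by exact_mod_cast hk
  subst h2 h6
  nlinarith [mul_nonneg (by linarith : (0:ℚ) ≤ (e:ℚ)) (by linarith : (0:ℚ) ≤ (k:ℚ))]
end

section
/- There do not exist rational numbers δ ≥ 0, a > 0, b ≥ 0, k > 0 and rational numbers t₂, t₆ satisfying simultaneously: 2t₂ + 30t₆ = a(k² − k), 2t₂ + 6t₆ = k·(a(k−1) − 8a − 4b)/3, and 4δ + (5a+2b)k + t₂ = 3t₆. -/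
/-- Combined combinatorial statement underlying Theorem 2 for `n = 2`: the
intersection identity, the proportionality condition, and the ball-quotient
condition cannot hold simultaneously. -/
theorem stmt_14 :
    ¬ ∃ (δ a b k t₂ t₆ : ℚ), 0 ≤ δ ∧ 0 < a ∧ 0 ≤ b ∧ 0 < k ∧
      2 * t₂ + 30 * t₆ = a * (k ^ 2 - k) ∧
      2 * t₂ + 6 * t₆ = k * (a * (k - 1) - 8 * a - 4 * b) / 3 ∧
      4 * δ + (5 * a + 2 * b) * k + t₂ = 3 * t₆ := by
  rintro ⟨δ, a, b, k, t₂, t₆, hδ, ha, hb, hk, h1, h2, h3⟩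
  have key : 4 * δ + (3 * a + b) * k = 0 := by
    linear_combination h3 + (1/4) * h1 - (3/4) * h2
  nlinarith [mul_pos (by linarith : (0:ℚ) < 3 * a + b) hk]
end
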